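/- arXiv:math/0206309 — 2 statements merged into one kernel-verified Lean document; each statement's English description precedes it below -/
import Mathlib

section
/- For f ∈ C_c(ℝ), the L² norm of f on ℝ equals the L² norm of its Zak transform Zf restricted to the unit square [0,1]², i.e., ∫_ℝ |f(y)|² dy = ∫_0^1 ∫_0^1 |Zf(x,ω)|² dω dx. -/
/-!
For `x ∈ [0,1]` only finitely many translates `f (x - m)` are nonzero, so `ω ↦ Zf(x,ω)` is a
trigonometric polynomial with coefficients `f (x - m)`; orthonormality of `e^{2πimω}` on `[0,1]`
gives `∫₀¹ |Zf(x,ω)|² dω = Σₘ |f(x-m)|²`. Integrating in `x`, the intervals `[-m, 1-m]` tile `ℝ`.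
-/

open MeasureTheory Real

/-- The Zak transform `Zf(x,ω) = Σ_{m∈ℤ} f(x−m) e^{2πimω}`. -/
noncomputable def zak (f : ℝ → ℂ) (x ω : ℝ) : ℂ :=
  ∑' m : ℤ, f (x - m) * Complex.exp (2 * Real.pi * Complex.I * m * ω)

open Complex Set ComplexConjugate Pointwise

lemma integral_exp_two_pi_I_int_mul (k : ℤ) :
    ∫ ω in (0:ℝ)..1, cexp (2 * π * I * k * ω) = if k = 0 then 1 else 0 := by
  split_ifs with hk
  · simp [hk]
  have hc : 2 * π * I * k ≠ 0 := by simp [pi_ne_zero, hk]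
  rw [integral_exp_mul_complex hc, ofReal_one, ofReal_zero, mul_one, mul_zero, Complex.exp_zero,
    show 2 * π * I * k = k * (2 * π * I) by ring, exp_int_mul_two_pi_mul_I, sub_self, zero_div]

lemma exp_two_pi_I_int_mul_mul_conj (m n : ℤ) (ω : ℝ) :
    cexp (2 * π * I * m * ω) * conj (cexp (2 * π * I * n * ω)) =
      cexp (2 * π * I * ↑(m - n) * ω) := by
  rw [← exp_conj, ← Complex.exp_add]
  congr 1
  simp only [map_mul, conj_I, conj_ofReal, map_intCast, map_ofNat]
  push_cast
  ring

lemma integral_exp_two_pi_I_int_mul_mul_conj (m n : ℤ) :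
    ∫ ω in (0:ℝ)..1, cexp (2 * π * I * m * ω) * conj (cexp (2 * π * I * n * ω)) =
      if m = n then 1 else 0 := by
  simp_rw [exp_two_pi_I_int_mul_mul_conj, integral_exp_two_pi_I_int_mul, sub_eq_zero]

lemma integral_norm_sq_finset_sum_exp (s : Finset ℤ) (c : ℤ → ℂ) :
    ∫ ω in (0:ℝ)..1, ‖∑ m ∈ s, c m * cexp (2 * π * I * m * ω)‖ ^ 2 = ∑ m ∈ s, ‖c m‖ ^ 2 := by
  set e : ℤ → ℝ → ℂ := fun m ω => cexp (2 * π * I * m * ω)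
  have hexpand (ω : ℝ) : ((‖∑ m ∈ s, c m * e m ω‖ ^ 2 : ℝ) : ℂ) =
      ∑ m ∈ s, ∑ n ∈ s, c m * conj (c n) * (e m ω * conj (e n ω)) := by
    rw [ofReal_pow, ← mul_conj', map_sum, Finset.sum_mul_sum]
    refine Finset.sum_congr rfl fun m _ => Finset.sum_congr rfl fun n _ => ?_
    rw [map_mul]
    ring
  have hcont (m n : ℤ) : Continuous fun ω => c m * conj (c n) * (e m ω * conj (e n ω)) := by
    fun_prop
  apply ofReal_injective
  rw [← intervalIntegral.integral_ofReal, intervalIntegral.integral_congr fun ω _ => hexpand ω,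
    intervalIntegral.integral_finsetSum fun m _ =>
      (continuous_finsetSum _ fun n _ => hcont m n).intervalIntegrable _ _]
  push_cast
  refine Finset.sum_congr rfl fun m hm => ?_
  rw [intervalIntegral.integral_finsetSum fun n _ => (hcont m n).intervalIntegrable _ _]
  simp_rw [intervalIntegral.integral_const_mul, e, integral_exp_two_pi_I_int_mul_mul_conj]
  simp [hm, mul_conj']

lemma HasCompactSupport.exists_finset_int_sub_eq_zero {E : Type*} [TopologicalSpace E] [Zero E]
    {f : ℝ → E} (hf : HasCompactSupport f) {K : Set ℝ} (hK : IsCompact K) :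
    ∃ s : Finset ℤ, ∀ x ∈ K, ∀ m ∉ s, f (x - m) = 0 := by
  have hdiff : IsCompact (K - tsupport f) := by
    rw [← sub_image_prod]
    exact (hK.prod hf).image continuous_sub
  have hfin : {m : ℤ | (m : ℝ) ∈ K - tsupport f}.Finite := by
    simpa only [mem_compl_iff, not_not] using
      Filter.eventually_cofinite.mp (Int.tendsto_coe_cofinite.eventually hdiff.compl_mem_cocompact)
  refine ⟨hfin.toFinset, fun x hx m hm => ?_⟩
  by_contra hne
  exact hm <| hfin.mem_toFinset.mpr
    ⟨x, hx, x - m, subset_tsupport f hne, sub_sub_cancel x m⟩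

lemma integral_eq_sum_intervalIntegral_comp_sub_int {E : Type*} [NormedAddCommGroup E]
    [NormedSpace ℝ E] {g : ℝ → E} (hg : Integrable g) (s : Finset ℤ)
    (hs : ∀ x ∈ Icc (0:ℝ) 1, ∀ m ∉ s, g (x - m) = 0) :
    ∫ y, g y = ∑ m ∈ s, ∫ x in (0:ℝ)..1, g (x - m) := by
  have hsum : HasSum (fun m : ℤ => ∫ x in (0:ℝ)..1, g (x - m)) (∫ y, g y) := by
    simpa [sub_eq_add_neg, Function.comp_def] using
      (Equiv.neg ℤ).hasSum_iff.mpr hg.hasSum_intervalIntegral_comp_add_int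
  refine hsum.unique (hasSum_sum_of_ne_finset_zero fun m hm => ?_)
  have hzero : EqOn (fun x => g (x - m)) (fun _ => 0) (uIcc 0 1) := fun x hx =>
    hs x (by rwa [uIcc_of_le zero_le_one] at hx) m hm
  rw [intervalIntegral.integral_congr hzero, intervalIntegral.integral_zero]

lemma zak_eq_finset_sum {f : ℝ → ℂ} {x : ℝ} {s : Finset ℤ} (hs : ∀ m ∉ s, f (x - m) = 0)
    (ω : ℝ) : zak f x ω = ∑ m ∈ s, f (x - m) * cexp (2 * π * I * m * ω) :=
  tsum_eq_sum fun m hm => by rw [hs m hm, zero_mul]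

/-- the Zak transform is isometric:
`∫_ℝ |f(y)|² dy = ∫_0^1 ∫_0^1 |Zf(x,ω)|² dω dx` for `f ∈ C_c(ℝ)`. -/
theorem zak_isometry (f : ℝ → ℂ) (hc : Continuous f) (hs : HasCompactSupport f) :
    ∫ y : ℝ, ‖f y‖ ^ 2 = ∫ x in (0:ℝ)..1, ∫ ω in (0:ℝ)..1, ‖zak f x ω‖ ^ 2 := by
  obtain ⟨s, hfs⟩ := hs.exists_finset_int_sub_eq_zero (isCompact_Icc (a := 0) (b := 1))
  have hcont : Continuous fun y => ‖f y‖ ^ 2 := by fun_prop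
  have hsupp : HasCompactSupport fun y => ‖f y‖ ^ 2 := hs.comp_left (g := fun z : ℂ => ‖z‖ ^ 2) (by simp)
  calc ∫ y : ℝ, ‖f y‖ ^ 2
      = ∑ m ∈ s, ∫ x in (0:ℝ)..1, ‖f (x - m)‖ ^ 2 :=
        integral_eq_sum_intervalIntegral_comp_sub_int
          (hcont.integrable_of_hasCompactSupport hsupp) s
          fun x hx m hm => by simp [hfs x hx m hm]
    _ = ∫ x in (0:ℝ)..1, ∑ m ∈ s, ‖f (x - m)‖ ^ 2 :=
        (intervalIntegral.integral_finsetSum fun m _ =>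
          (hcont.comp (continuous_sub_right _)).intervalIntegrable _ _).symm
    _ = ∫ x in (0:ℝ)..1, ∫ ω in (0:ℝ)..1, ‖zak f x ω‖ ^ 2 := by
        refine intervalIntegral.integral_congr fun x hx => ?_
        rw [uIcc_of_le zero_le_one] at hx
        simp_rw [zak_eq_finset_sum (hfs x hx)]
        exact (integral_norm_sq_finset_sum_exp s _).symm
end

section
/- If F : ℝ² → ℂ satisfies the quasi-periodicity relation F(x+m, ω+n) = e^{2πimω} F(x,ω) for all m,n ∈ ℤ, then for any n,k,l ∈ ℤ the function G(x,ω) = e^{2πi(l−nk)/L} e^{2πinx/L} F(x−k, ω−n/L) also satisfies the same quasi-periodicity relation. -/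
/-- if `F` is quasi-periodic, i.e. `F(x+m, ω+n) = e^{2πimω} F(x,ω)` for all
`m,n ∈ ℤ`, then `G(x,ω) = e^{2πi(l−nk)/L} e^{2πinx/L} F(x−k, ω−n/L)` is also quasi-periodic. -/
theorem quasi_periodic_stable (L : ℕ) (hL : 1 ≤ L) (F : ℝ → ℝ → ℂ)
    (hF : ∀ (m n : ℤ) (x ω : ℝ),
      F (x + m) (ω + n) = Complex.exp (2 * Real.pi * Complex.I * m * ω) * F x ω)
    (n k l : ℤ) :
    ∀ (m n' : ℤ) (x ω : ℝ),
      (Complex.exp (2 * Real.pi * Complex.I * ((l : ℂ) - n * k) / L) *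
          Complex.exp (2 * Real.pi * Complex.I * n * (x + m) / L) *
          F (x + m - k) (ω + n' - n / L))
        = Complex.exp (2 * Real.pi * Complex.I * m * ω) *
          (Complex.exp (2 * Real.pi * Complex.I * ((l : ℂ) - n * k) / L) *
            Complex.exp (2 * Real.pi * Complex.I * n * x / L) *
            F (x - k) (ω - n / L)) := by
  intro m n' x ω
  have h1 : x + (m : ℝ) - k = (x - k) + (m : ℝ) := by ring
  have h2 : ω + (n' : ℝ) - n / L = (ω - n / L) + (n' : ℝ) := by ring
  rw [h1, h2, hF m n']
  have key : Complex.exp (2 * Real.pi * Complex.I * ((l : ℂ) - n * k) / L) *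
      Complex.exp (2 * Real.pi * Complex.I * n * (x + m) / L) *
      Complex.exp (2 * Real.pi * Complex.I * m * ((ω - n / L : ℝ) : ℂ)) =
      Complex.exp (2 * Real.pi * Complex.I * m * ω) *
        (Complex.exp (2 * Real.pi * Complex.I * ((l : ℂ) - n * k) / L) *
          Complex.exp (2 * Real.pi * Complex.I * n * x / L)) := by
    rw [← Complex.exp_add, ← Complex.exp_add, ← Complex.exp_add, ← Complex.exp_add]
    congr 1
    push_cast
    ring
  linear_combination (F (x - k) (ω - n / L)) * key
end
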